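/- Let A, B, C : 𝒪 → 𝒪 be ℝ-linear bijections of the real Okubo algebra satisfying the triality relation B(s*x) = C(s)*A(x) for all s, x ∈ 𝒪. If moreover B(e*x) = e*A(x) and B(x*e) = C(x)*e for all x ∈ 𝒪, where e = diag(2,−1,−1) is the idempotent of 𝒪, then A(e) = B(e) = C(e) = e. -/

import Mathlib

open Matrix Complex

noncomputable section

/-- `3 × 3` complex matrices. -/
abbrev M3 : Type := Matrix (Fin 3) (Fin 3) ℂ

/-- The real Okubo algebra: `3 × 3` traceless Hermitian complex matrices. -/
def Okubo : Set M3 := {x | x.IsHermitian ∧ x.trace = 0}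

/-- The constant `μ = (3 + i√3)/6`. -/
def okMu : ℂ := (3 + (Real.sqrt 3 : ℂ) * Complex.I) / 6

/-- The Okubo product `x*y = μ·(xy) + μ̄·(yx) − (1/3)Tr(xy)·Id`. -/
def omul (x y : M3) : M3 :=
  okMu • (x * y) + (starRingEnd ℂ) okMu • (y * x) - ((1 / 3 : ℂ) * (x * y).trace) • (1 : M3)

/-- The Okubic norm `n(x) = (1/6)Tr(x²)` (real-valued on Hermitian matrices). -/
def onorm (x : M3) : ℝ := (1 / 6) * ((x * x).trace).re

/-- The polar form `⟨x,y⟩ = n(x+y) − n(x) − n(y)` of the Okubic norm. -/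
def opolar (x y : M3) : ℝ := onorm (x + y) - onorm x - onorm y


/-- The idempotent `e = diag(2, −1, −1)` of the real Okubo algebra. -/
def eOk : M3 := Matrix.diagonal ![2, -1, -1]

/-! The Okubo algebra is a symmetric composition algebra: `(x * y) * x = x * (y * x) = n(x) y`.
For the idempotent `e` of norm `1` this makes left and right multiplication by `e` mutually
inverse on traceless matrices. Choosing `x` with `A(x) = e`, triality and `B(e * x) = e * A(x)`
give `C(e) * e = e * e = e`, hence `C(e) = e * (C(e) * e) = e * e = e`; dually `A(e) = e`,
and then `B(e) = B(e * e) = e * A(e) = e`. -/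

lemma okMu_re : okMu.re = 1 / 2 := by
  norm_num [okMu]

lemma okMu_im : okMu.im = √3 / 6 := by
  simp [okMu]

lemma okMu_add_conj : okMu + starRingEnd ℂ okMu = 1 := by
  rw [Complex.add_conj, okMu_re]
  norm_num

lemma okMu_mul_conj : okMu * starRingEnd ℂ okMu = 1 / 3 := by
  have h3 : (√3 : ℂ) * √3 = 3 := by exact_mod_cast Real.mul_self_sqrt (by norm_num)
  rw [Complex.mul_conj, Complex.normSq_apply, okMu_re, okMu_im]
  push_cast
  linear_combination h3 / 36

lemma omul_transpose (x y : M3) : (omul x y)ᵀ = omul yᵀ xᵀ := by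
  simp only [omul, transpose_sub, transpose_add, transpose_smul, transpose_mul, transpose_one,
    ← trace_transpose (x * y)]

lemma eOk_mem : eOk ∈ Okubo := by
  refine ⟨?_, ?_⟩
  · ext i j
    fin_cases i <;> fin_cases j <;> simp [eOk]
  · simp only [eOk, trace, diag_apply, diagonal_apply_eq, Fin.sum_univ_three, Fin.isValue,
      cons_val_zero, cons_val_one, cons_val]
    norm_num

lemma eOk_transpose : eOkᵀ = eOk :=
  diagonal_transpose _

-- Entrywise, both identities below only use `μ + μ̄ = 1` and `μ μ̄ = 1/3`.
lemma omul_eOk_eOk : omul eOk eOk = eOk := by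
  have h_add := okMu_add_conj
  have h_mul := okMu_mul_conj
  ext i j
  fin_cases i <;> fin_cases j <;>
    simp [omul, eOk, trace, Fin.sum_univ_three, one_apply] <;> grind

lemma omul_omul_eOk_eOk {w : M3} (hw : w.trace = 0) : omul (omul eOk w) eOk = w := by
  have h_add := okMu_add_conj
  have h_mul := okMu_mul_conj
  simp only [trace, diag, Fin.sum_univ_three] at hw
  ext i j
  fin_cases i <;> fin_cases j <;>
    simp [omul, eOk, mul_apply, trace, Fin.sum_univ_three, one_apply] <;> grind

lemma omul_eOk_omul_eOk {w : M3} (hw : w.trace = 0) : omul eOk (omul w eOk) = w := by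
  apply transpose_injective
  rw [omul_transpose, omul_transpose, eOk_transpose,
    omul_omul_eOk_eOk (by rwa [trace_transpose])]

theorem okubo_paper_stmt19_general (A B C : M3 → M3)
    (hAbij : Set.BijOn A Okubo Okubo)
    (hCbij : Set.BijOn C Okubo Okubo)
    (htri : ∀ s ∈ Okubo, ∀ x ∈ Okubo, B (omul s x) = omul (C s) (A x))
    (h1 : ∀ x ∈ Okubo, B (omul eOk x) = omul eOk (A x))
    (h2 : ∀ x ∈ Okubo, B (omul x eOk) = omul (C x) eOk) :
    A eOk = eOk ∧ B eOk = eOk ∧ C eOk = eOk := by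
  obtain ⟨x, hx, hAx⟩ := hAbij.surjOn eOk_mem
  obtain ⟨s, hs, hCs⟩ := hCbij.surjOn eOk_mem
  have hCe_mul : omul (C eOk) eOk = eOk :=
    calc omul (C eOk) eOk = omul (C eOk) (A x) := by rw [hAx]
      _ = B (omul eOk x) := (htri eOk eOk_mem x hx).symm
      _ = omul eOk (A x) := h1 x hx
      _ = eOk := by rw [hAx, omul_eOk_eOk]
  have hAe_mul : omul eOk (A eOk) = eOk :=
    calc omul eOk (A eOk) = omul (C s) (A eOk) := by rw [hCs]
      _ = B (omul s eOk) := (htri s hs eOk eOk_mem).symm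
      _ = omul (C s) eOk := h2 s hs
      _ = eOk := by rw [hCs, omul_eOk_eOk]
  have hCe : C eOk = eOk := by
    rw [← omul_eOk_omul_eOk (hCbij.mapsTo eOk_mem).2, hCe_mul, omul_eOk_eOk]
  have hAe : A eOk = eOk := by
    rw [← omul_omul_eOk_eOk (hAbij.mapsTo eOk_mem).2, hAe_mul, omul_eOk_eOk]
  refine ⟨hAe, ?_, hCe⟩
  rw [← omul_eOk_eOk, h1 eOk eOk_mem, hAe, omul_eOk_eOk]

/-- Let `A, B, C` be ℝ-linear bijections of the real Okubo algebra
satisfying the triality relation `B(s*x) = C(s)*A(x)`. If moreover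
`B(e*x) = e*A(x)` and `B(x*e) = C(x)*e` for all `x ∈ 𝒪`, then
`A(e) = B(e) = C(e) = e`. -/
theorem okubo_paper_stmt19 (A B C : M3 → M3)
    (hAbij : Set.BijOn A Okubo Okubo)
    (hBbij : Set.BijOn B Okubo Okubo)
    (hCbij : Set.BijOn C Okubo Okubo)
    (hAadd : ∀ x ∈ Okubo, ∀ y ∈ Okubo, A (x + y) = A x + A y)
    (hBadd : ∀ x ∈ Okubo, ∀ y ∈ Okubo, B (x + y) = B x + B y)
    (hCadd : ∀ x ∈ Okubo, ∀ y ∈ Okubo, C (x + y) = C x + C y)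
    (hAsmul : ∀ (c : ℝ), ∀ x ∈ Okubo, A (c • x) = c • A x)
    (hBsmul : ∀ (c : ℝ), ∀ x ∈ Okubo, B (c • x) = c • B x)
    (hCsmul : ∀ (c : ℝ), ∀ x ∈ Okubo, C (c • x) = c • C x)
    (htri : ∀ s ∈ Okubo, ∀ x ∈ Okubo, B (omul s x) = omul (C s) (A x))
    (h1 : ∀ x ∈ Okubo, B (omul eOk x) = omul eOk (A x))
    (h2 : ∀ x ∈ Okubo, B (omul x eOk) = omul (C x) eOk) :
    A eOk = eOk ∧ B eOk = eOk ∧ C eOk = eOk :=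
  okubo_paper_stmt19_general A B C hAbij hCbij htri h1 h2

end
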